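/- arXiv:2505.15555 — 5 statements merged into one kernel-verified Lean document; each statement's English description precedes it below -/
import Mathlib

section
/- Theorem 2(a) (local minima are global): If ρ is a loss function, then any local minimizer of the conditional objective 𝓛 on [0,∞) is a global minimizer of 𝓛 on [0,∞). -/
open Matrix ComplexOrder

noncomputable section

/-- The covariance matrix `Σ(γ) = Σ₀ + γ·a aᴴ`. -/
def Sig {L : ℕ} (S0 : Matrix (Fin L) (Fin L) ℂ) (a : Fin L → ℂ) (γ : ℝ) :
    Matrix (Fin L) (Fin L) ℂ :=
  S0 + (γ : ℂ) • vecMulVec a (star a)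

/-- The squared Mahalanobis distance `s(γ) = yᴴ Σ(γ)⁻¹ y` (a real number). -/
def mdist {L : ℕ} (S0 : Matrix (Fin L) (Fin L) ℂ) (a : Fin L → ℂ) (y : Fin L → ℂ)
    (γ : ℝ) : ℝ :=
  (star y ⬝ᵥ (Sig S0 a γ)⁻¹ *ᵥ y).re

/-- The conditional objective `𝓛(γ) = (1/(bM)) Σₘ ρ(sₘ(γ)) + log det Σ(γ)`. -/
def obj {L M : ℕ} (S0 : Matrix (Fin L) (Fin L) ℂ) (a : Fin L → ℂ)
    (y : Fin M → Fin L → ℂ) (b : ℝ) (ρ : ℝ → ℝ) (γ : ℝ) : ℝ :=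
  (1 / (b * M)) * ∑ m, ρ (mdist S0 a (y m) γ) + Real.log ((Sig S0 a γ).det.re)

/-! ### Auxiliary convexity lemmas -/

lemma convA (c : ℝ) (hc : 0 ≤ c) :
    ConvexOn ℝ Set.univ (fun x => Real.log (1 + c * Real.exp x)) := by
  rcases eq_or_lt_of_le hc with h | h
  · simp only [← h, zero_mul, add_zero]; exact convexOn_const _ convex_univ
  · have pos : ∀ x : ℝ, 0 < 1 + c * Real.exp x := fun x => by positivity
    have hd : ∀ x : ℝ, HasDerivAt (fun x => Real.log (1 + c * Real.exp x))
        (c * Real.exp x / (1 + c * Real.exp x)) x := by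
      intro x
      simpa using (((Real.hasDerivAt_exp x).const_mul c).const_add 1).log (pos x).ne'
    have hderiv : deriv (fun x => Real.log (1 + c * Real.exp x)) =
        fun x => c * Real.exp x / (1 + c * Real.exp x) := funext fun x => (hd x).deriv
    refine Monotone.convexOn_univ_of_deriv (fun x => (hd x).differentiableAt) ?_
    rw [hderiv]
    intro x y hxy
    rw [div_le_div_iff₀ (pos x) (pos y)]
    have := Real.exp_le_exp.2 hxy
    nlinarith [Real.exp_pos x, Real.exp_pos y]

lemma convB (α β : ℝ) (hα : 0 ≤ α) (hβ : 0 < β) :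
    ConvexOn ℝ Set.univ (fun x => Real.log (α + β * Real.exp (-x))) := by
  have key : ∀ x : ℝ, Real.log (α + β * Real.exp (-x)) =
      (Real.log β + -x) + Real.log (1 + (α / β) * Real.exp x) := by
    intro x
    have h1 : α + β * Real.exp (-x) =
        (β * Real.exp (-x)) * (1 + (α / β) * Real.exp x) := by
      field_simp [Real.exp_neg]
      have he : Real.exp (-x) * Real.exp x = 1 := by rw [← Real.exp_add]; simp
      linear_combination (-α) * he
    rw [h1, Real.log_mul (by positivity) (by positivity), Real.log_mul hβ.ne' (by positivity),
      Real.log_exp]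
  simp only [key]
  refine ConvexOn.add ?_ (convA _ (by positivity))
  refine ⟨convex_univ, fun x _ y _ a b ha hb hab => le_of_eq ?_⟩
  simp only [smul_eq_mul]
  linear_combination (-(Real.log β)) * hab

lemma convC (ρ : ℝ → ℝ) (hmono : MonotoneOn ρ (Set.Ici 0))
    (hgeo : ConvexOn ℝ Set.univ (fun x => ρ (Real.exp x)))
    (α β : ℝ) (hα : 0 < β → 0 ≤ α) (hβ : 0 ≤ β) :
    ConvexOn ℝ Set.univ (fun x => ρ (α + β * Real.exp (-x))) := by
  rcases eq_or_lt_of_le hβ with h | h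
  · simp only [← h, zero_mul, add_zero]; exact convexOn_const _ convex_univ
  · set k : ℝ → ℝ := fun x => Real.log (α + β * Real.exp (-x)) with hk
    have hα' := hα h
    have pos : ∀ x : ℝ, 0 < α + β * Real.exp (-x) := fun x => by positivity
    have hek : ∀ x : ℝ, Real.exp (k x) = α + β * Real.exp (-x) := fun x =>
      Real.exp_log (pos x)
    have hkc := convB α β hα' h
    refine ⟨convex_univ, fun x _ y _ a b ha hb hab => ?_⟩
    have h1 : k (a • x + b • y) ≤ a • k x + b • k y :=
      hkc.2 (Set.mem_univ x) (Set.mem_univ y) ha hb hab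
    have hmexp : Monotone (fun u : ℝ => ρ (Real.exp u)) := fun u v huv =>
      hmono (Set.mem_Ici.2 (Real.exp_pos u).le) (Set.mem_Ici.2 (Real.exp_pos v).le)
        (Real.exp_le_exp.2 huv)
    calc ρ (α + β * Real.exp (-(a • x + b • y)))
        = ρ (Real.exp (k (a • x + b • y))) := by rw [hek]
      _ ≤ ρ (Real.exp (a • k x + b • k y)) := hmexp h1
      _ ≤ a • ρ (Real.exp (k x)) + b • ρ (Real.exp (k y)) :=
          hgeo.2 (Set.mem_univ _) (Set.mem_univ _) ha hb hab
      _ = a • ρ (α + β * Real.exp (-x)) + b • ρ (α + β * Real.exp (-y)) := by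
          rw [hek, hek]

lemma convexOn_finset_sum {ι : Type*} (s : Finset ι) (f : ι → ℝ → ℝ)
    (h : ∀ i ∈ s, ConvexOn ℝ Set.univ (f i)) :
    ConvexOn ℝ Set.univ (fun x => ∑ i ∈ s, f i x) := by
  induction s using Finset.cons_induction with
  | empty => simpa using convexOn_const (0:ℝ) convex_univ
  | cons i s hi ih =>
      simp only [Finset.sum_cons]
      exact (h i (Finset.mem_cons_self i s)).add
        (ih fun j hj => h j (Finset.mem_cons_of_mem hj))

/-! ### Matrix helper lemmas -/

variable {L : ℕ}

lemma mul_vvc (M : Matrix (Fin L) (Fin L) ℂ) (u v : Fin L → ℂ) :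
    M * vecMulVec u v = vecMulVec (M *ᵥ u) v := by
  ext i j
  simp only [mul_apply, vecMulVec_apply, mulVec, dotProduct, Finset.sum_mul]
  exact Finset.sum_congr rfl fun k _ => by ring

lemma vvc_mul (M : Matrix (Fin L) (Fin L) ℂ) (u v : Fin L → ℂ) :
    vecMulVec u v * M = vecMulVec u (v ᵥ* M) := by
  ext i j
  simp only [mul_apply, vecMulVec_apply, vecMul, dotProduct, Finset.mul_sum]
  exact Finset.sum_congr rfl fun k _ => by ring

lemma vvc_mul_vvc (u v u' v' : Fin L → ℂ) :
    vecMulVec u v * vecMulVec u' v' = (v ⬝ᵥ u') • vecMulVec u v' := by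
  ext i j
  simp only [mul_apply, vecMulVec_apply, Matrix.smul_apply, dotProduct, smul_eq_mul, Finset.sum_mul]
  exact Finset.sum_congr rfl fun k _ => by ring

lemma vvc_mulVec (u v x : Fin L → ℂ) :
    vecMulVec u v *ᵥ x = (v ⬝ᵥ x) • u := by
  ext i
  simp only [mulVec, vecMulVec_apply, dotProduct, Pi.smul_apply, smul_eq_mul, Finset.sum_mul]
  exact Finset.sum_congr rfl fun k _ => by ring

lemma vvc_smul (t : ℂ) (u v : Fin L → ℂ) :
    t • vecMulVec u v = vecMulVec (t • u) v := by
  ext i j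
  simp [vecMulVec_apply, mul_assoc]

lemma vvc_psd (a : Fin L → ℂ) (γ : ℝ) (hγ : 0 ≤ γ) :
    ((γ : ℂ) • vecMulVec a (star a)).PosSemidef := by
  apply Matrix.PosSemidef.of_dotProduct_mulVec_nonneg
  · unfold Matrix.IsHermitian
    rw [conjTranspose_smul]
    congr 1
    · simp [Complex.ext_iff]
    · ext i j; simp [conjTranspose_apply, vecMulVec_apply, mul_comm]
  · intro x
    rw [smul_mulVec, vvc_mulVec, dotProduct_smul, dotProduct_smul]
    have h1 : star x ⬝ᵥ a = star (star a ⬝ᵥ x) := by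
      rw [star_dotProduct]
    have h2 : (star a ⬝ᵥ x) * star (star a ⬝ᵥ x) = (Complex.normSq (star a ⬝ᵥ x) : ℂ) :=
      Complex.mul_conj _
    rw [h1, smul_eq_mul, smul_eq_mul, h2, ← Complex.ofReal_mul]
    exact Complex.zero_le_real.2 (mul_nonneg hγ (Complex.normSq_nonneg _))

lemma sig_posdef {S0 : Matrix (Fin L) (Fin L) ℂ} (hS0 : S0.PosDef) (a : Fin L → ℂ)
    (γ : ℝ) (hγ : 0 ≤ γ) : (Sig S0 a γ).PosDef :=
  hS0.add_posSemidef (vvc_psd a γ hγ)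

lemma sig_det {S0 : Matrix (Fin L) (Fin L) ℂ} (hS0 : S0.PosDef) (a : Fin L → ℂ)
    (γ : ℝ) :
    (Sig S0 a γ).det = S0.det * (1 + (γ:ℂ) * (star a ⬝ᵥ S0⁻¹ *ᵥ a)) := by
  have hu : IsUnit S0.det := hS0.det_pos.ne'.isUnit
  have hfact : Sig S0 a γ = S0 * (1 + (γ:ℂ) • vecMulVec (S0⁻¹ *ᵥ a) (star a)) := by
    rw [Matrix.mul_add, Matrix.mul_one, Matrix.mul_smul, mul_vvc, mulVec_mulVec,
      Matrix.mul_nonsing_inv _ hu, one_mulVec]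
    rfl
  rw [hfact, det_mul, vvc_smul, vecMulVec_eq Unit, det_one_add_replicateCol_mul_replicateRow,
    dotProduct_smul]
  simp only [smul_eq_mul]
  try ring

lemma sig_inv {S0 : Matrix (Fin L) (Fin L) ℂ} (hS0 : S0.PosDef) (a : Fin L → ℂ)
    {cr : ℝ} (hc : star a ⬝ᵥ S0⁻¹ *ᵥ a = (cr : ℂ)) (γ : ℝ) (hden : 0 < 1 + γ * cr) :
    (Sig S0 a γ)⁻¹ = S0⁻¹ -
      ((γ / (1 + γ * cr) : ℝ) : ℂ) • vecMulVec (S0⁻¹ *ᵥ a) (star a ᵥ* S0⁻¹) := by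
  have hu : IsUnit S0.det := hS0.det_pos.ne'.isUnit
  apply Matrix.inv_eq_right_inv
  unfold Sig
  set B := S0⁻¹ with hB
  set w := B *ᵥ a with hw
  set v := star a ᵥ* B with hv
  set T : ℂ := ((γ / (1 + γ * cr) : ℝ) : ℂ) with hT
  set X := vecMulVec a v with hX
  have h1 : S0 * B = 1 := Matrix.mul_nonsing_inv _ hu
  have e1 : S0 * vecMulVec w v = X := by
    rw [mul_vvc, hw, mulVec_mulVec, h1, one_mulVec]
  have e2 : vecMulVec a (star a) * B = X := vvc_mul ..
  have e3 : vecMulVec a (star a) * vecMulVec w v = (cr:ℂ) • X := by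
    rw [vvc_mul_vvc, hc]
  have hne : (1 + γ * cr) ≠ 0 := hden.ne'
  have hr : γ - γ * ((γ / (1 + γ * cr)) * cr) = γ / (1 + γ * cr) := by
    field_simp
    ring
  have hscal : (γ:ℂ) - (γ:ℂ) * (T * (cr:ℂ)) = T := by
    rw [hT]
    push_cast
    exact_mod_cast hr
  have hz : (γ:ℂ) - (T + T * ((γ:ℂ) * (cr:ℂ))) = 0 := by linear_combination hscal
  have key : (S0 + (γ:ℂ) • vecMulVec a (star a)) * (B - T • vecMulVec w v) =
      (1 + (γ:ℂ) • X) - (T • X + (T * ((γ:ℂ) * (cr:ℂ))) • X) := by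
    simp only [Matrix.add_mul, Matrix.mul_sub, Matrix.smul_mul, Matrix.mul_smul, h1, e1, e2, e3,
      smul_add, smul_smul]
  rw [key]
  calc (1 + (γ:ℂ) • X) - (T • X + (T * ((γ:ℂ) * (cr:ℂ))) • X)
      = 1 + ((γ:ℂ) - (T + T * ((γ:ℂ) * (cr:ℂ)))) • X := by
        rw [sub_smul, add_smul]; abel
    _ = 1 := by rw [hz, zero_smul, add_zero]

lemma mdist_eq {S0 : Matrix (Fin L) (Fin L) ℂ} (hS0 : S0.PosDef) (a : Fin L → ℂ)
    {cr : ℝ} (hc : star a ⬝ᵥ S0⁻¹ *ᵥ a = (cr : ℂ)) (γ : ℝ) (hden : 0 < 1 + γ * cr)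
    (y : Fin L → ℂ) :
    mdist S0 a y γ = (star y ⬝ᵥ S0⁻¹ *ᵥ y).re -
      (γ / (1 + γ * cr)) * Complex.normSq (star a ⬝ᵥ S0⁻¹ *ᵥ y) := by
  have hH : S0⁻¹.IsHermitian := hS0.isHermitian.inv
  set B := S0⁻¹ with hB
  set z := star a ⬝ᵥ B *ᵥ y with hz
  have hyw : star y ⬝ᵥ (B *ᵥ a) = star z := by
    rw [star_dotProduct, star_mulVec, hH.eq, hz, dotProduct_mulVec]
  unfold mdist
  rw [sig_inv hS0 a hc γ hden]
  rw [Matrix.sub_mulVec, smul_mulVec, vvc_mulVec, dotProduct_sub, dotProduct_smul,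
    dotProduct_smul]
  have hvy : (star a ᵥ* B) ⬝ᵥ y = z := (dotProduct_mulVec _ _ _).symm
  rw [hvy, smul_eq_mul, smul_eq_mul, hyw]
  have h2 : z * star z = (Complex.normSq z : ℂ) := Complex.mul_conj _
  rw [h2, ← Complex.ofReal_mul, Complex.sub_re, Complex.ofReal_re]
theorem stmt1 (L M : ℕ) (hL : 0 < L) (hM : 0 < M)
    (S0 : Matrix (Fin L) (Fin L) ℂ) (hS0 : S0.PosDef)
    (a : Fin L → ℂ) (y : Fin M → Fin L → ℂ) (b : ℝ) (hb : 0 < b)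
    (ρ : ℝ → ℝ)
    (hmono : MonotoneOn ρ (Set.Ici 0))
    (hdiff : ∀ t > (0 : ℝ), DifferentiableAt ℝ ρ t)
    (hderiv : ∀ t > (0 : ℝ), 0 ≤ deriv ρ t)
    (hgeo : ConvexOn ℝ Set.univ (fun x => ρ (Real.exp x)))
    (γstar : ℝ) (hγstar : γstar ∈ Set.Ici (0 : ℝ))
    (hloc : IsLocalMinOn (obj S0 a y b ρ) (Set.Ici 0) γstar) :
    ∀ γ ∈ Set.Ici (0 : ℝ), obj S0 a y b ρ γstar ≤ obj S0 a y b ρ γ := by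
  intro γ hγ
  have hγ0 : (0:ℝ) ≤ γ := hγ
  have hγs0 : (0:ℝ) ≤ γstar := hγstar
  have hcc : 0 ≤ star a ⬝ᵥ S0⁻¹ *ᵥ a := hS0.inv.posSemidef.dotProduct_mulVec_nonneg a
  set cr : ℝ := (star a ⬝ᵥ S0⁻¹ *ᵥ a).re with hcr
  have hled := Complex.le_def.1 hcc
  have hcr0 : 0 ≤ cr := by simpa using hled.1
  have hcR : star a ⬝ᵥ S0⁻¹ *ᵥ a = (cr:ℂ) := by
    apply Complex.ext
    · simp [hcr]
    · simpa using hled.2.symm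
  rcases eq_or_lt_of_le hcr0 with hc0 | hcpos
  · -- degenerate case: a = 0, objective is constant
    have ha : a = 0 := by
      by_contra ha
      have h1 := hS0.inv.dotProduct_mulVec_pos ha
      rw [hcR, ← hc0] at h1
      simp at h1
    have hSig : ∀ t : ℝ, Sig S0 a t = S0 := by
      intro t
      unfold Sig
      rw [ha]
      ext i j
      simp [vecMulVec_apply]
    have hconst : ∀ t : ℝ, obj S0 a y b ρ t = obj S0 a y b ρ 0 := by
      intro t
      unfold obj mdist
      rw [hSig, hSig]
    rw [hconst γ, hconst γstar]
  · -- main case: cr > 0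
    have hdet0 : (0:ℂ) < S0.det := hS0.det_pos
    have hldet := Complex.lt_def.1 hdet0
    have hdetre : 0 < S0.det.re := by simpa using hldet.1
    have hdetR : S0.det = (S0.det.re : ℂ) := by
      apply Complex.ext
      · simp
      · simpa using hldet.2.symm
    set p : Fin M → ℝ := fun m => (star (y m) ⬝ᵥ S0⁻¹ *ᵥ (y m)).re with hp
    set q : Fin M → ℝ := fun m => Complex.normSq (star a ⬝ᵥ S0⁻¹ *ᵥ (y m)) with hq
    set al : Fin M → ℝ := fun m => p m - q m / cr with hal
    set be : Fin M → ℝ := fun m => q m / cr with hbe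
    have hq0 : ∀ m, 0 ≤ q m := fun m => Complex.normSq_nonneg _
    have hbe0 : ∀ m, 0 ≤ be m := fun m => div_nonneg (hq0 m) hcpos.le
    have hpalbe : ∀ m, p m = al m + be m := by intro m; rw [hal, hbe]; ring
    have hden : ∀ t : ℝ, 0 ≤ t → 0 < 1 + t * cr := fun t ht => by nlinarith
    have hmd : ∀ (m) (t : ℝ), 0 ≤ t →
        mdist S0 a (y m) t = p m - (t / (1 + t * cr)) * q m := fun m t ht =>
      mdist_eq hS0 a hcR t (hden t ht) (y m)
    have hmd0 : ∀ (m) (t : ℝ), 0 ≤ t → 0 ≤ mdist S0 a (y m) t := by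
      intro m t ht
      have hpd := (sig_posdef hS0 a t ht).inv.posSemidef
      have h1 := (Complex.le_def.1 (hpd.dotProduct_mulVec_nonneg (y m))).1
      simpa [mdist] using h1
    have hqcr' : ∀ m, q m = be m * cr := fun m => by rw [hbe]; field_simp
    have hαm : ∀ m, 0 < be m → 0 ≤ al m := by
      intro m hbm
      by_contra hneg
      push_neg at hneg
      set A : ℝ := -(al m) with hA
      have hA0 : 0 < A := by simp [hA]; linarith
      set γ0 : ℝ := be m / (A * cr) with hγ0def
      have hγ00 : 0 ≤ γ0 := by positivity
      have h1 := hmd0 m γ0 hγ00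
      rw [hmd m γ0 hγ00] at h1
      have hs : 1 + γ0 * cr = 1 + be m / A := by
        rw [hγ0def]
        field_simp
      have hqcr := hqcr' m
      have hexp : p m - (γ0 / (1 + γ0 * cr)) * q m = al m + be m / (1 + γ0 * cr) := by
        rw [hpalbe m, hqcr]
        have hd := hden γ0 hγ00
        field_simp
        ring
      rw [hexp, hs] at h1
      have hd2 : (0:ℝ) < 1 + be m / A := by positivity
      have hlt : be m / (1 + be m / A) < A := by
        rw [div_lt_iff₀ hd2]
        have : A * (1 + be m / A) = A + be m := by field_simp
        rw [this]
        linarith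
      rw [show al m = -A by rw [hA]; ring] at h1
      linarith
    set F : ℝ → ℝ := fun x =>
      (1 / (b * M)) * ∑ m, ρ (al m + be m * Real.exp (-x)) +
        (x + Real.log (S0.det.re)) with hF
    have hobj : ∀ t : ℝ, 0 ≤ t → obj S0 a y b ρ t = F (Real.log (1 + t * cr)) := by
      intro t ht
      have hdt := hden t ht
      unfold obj
      rw [hF]
      simp only
      congr 1
      · congr 1
        apply Finset.sum_congr rfl
        intro m _
        rw [hmd m t ht, Real.exp_neg, Real.exp_log hdt]
        congr 1
        rw [hpalbe m, hqcr' m]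
        field_simp
        ring
      · rw [sig_det hS0 a t, hcR, hdetR]
        have hcast : (S0.det.re : ℂ) * (1 + (t:ℂ) * (cr:ℂ)) =
            ((S0.det.re * (1 + t * cr) : ℝ) : ℂ) := by push_cast; ring
        rw [hcast, Complex.ofReal_re, Real.log_mul hdetre.ne' hdt.ne']
        simp only [Complex.ofReal_re]
        ring
    have hbM : (0:ℝ) ≤ 1 / (b * M) := by
      have hM' : (0:ℝ) < (M:ℝ) := Nat.cast_pos.2 hM
      positivity
    have hconv : ConvexOn ℝ (Set.Ici 0) F := by
      have hsum : ConvexOn ℝ Set.univ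
          (fun x => ∑ m, ρ (al m + be m * Real.exp (-x))) := by
        have := convexOn_finset_sum (ι := Fin M) Finset.univ
          (fun m x => ρ (al m + be m * Real.exp (-x)))
          (fun m _ => convC ρ hmono hgeo (al m) (be m) (hαm m) (hbe0 m))
        simpa using this
      have h1 : ConvexOn ℝ Set.univ
          (fun x => (1 / (b * M)) * ∑ m, ρ (al m + be m * Real.exp (-x))) := by
        simpa [smul_eq_mul] using hsum.smul hbM
      have h2 : ConvexOn ℝ Set.univ (fun x : ℝ => x + Real.log (S0.det.re)) := by
        refine ⟨convex_univ, fun u _ v _ c d hc hd hcd => le_of_eq ?_⟩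
        simp only [smul_eq_mul]
        linear_combination (-(Real.log (S0.det.re))) * hcd
      exact (h1.add h2).subset (Set.subset_univ _) (convex_Ici 0)
    set xs : ℝ := Real.log (1 + γstar * cr) with hxs
    have hxs0 : (0:ℝ) ≤ xs := Real.log_nonneg (by nlinarith)
    set ψ : ℝ → ℝ := fun x => (Real.exp x - 1) / cr with hψ
    have hψcont : Continuous ψ := (Real.continuous_exp.sub continuous_const).div_const _
    have hψmaps : Set.MapsTo ψ (Set.Ici 0) (Set.Ici 0) := by
      intro x hx
      have : (1:ℝ) ≤ Real.exp x := Real.one_le_exp hx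
      exact Set.mem_Ici.2 (div_nonneg (by linarith) hcpos.le)
    have hψxs : ψ xs = γstar := by
      rw [hψ, hxs]
      simp only
      rw [Real.exp_log (hden γstar hγs0)]
      field_simp
      ring
    have hlog : ∀ x : ℝ, Real.log (1 + ψ x * cr) = x := by
      intro x
      rw [hψ]
      simp only
      rw [div_mul_cancel₀ _ hcpos.ne', show (1:ℝ) + (Real.exp x - 1) = Real.exp x by ring,
        Real.log_exp]
    have hcompF : ∀ x : ℝ, 0 ≤ x → obj S0 a y b ρ (ψ x) = F x := by
      intro x hx
      rw [hobj (ψ x) (hψmaps hx), hlog x]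
    have hFxs : obj S0 a y b ρ γstar = F xs := by
      rw [← hψxs, hcompF xs hxs0]
    have htend : Filter.Tendsto ψ (nhdsWithin xs (Set.Ici 0))
        (nhdsWithin γstar (Set.Ici 0)) := by
      have h := hψcont.continuousWithinAt.tendsto_nhdsWithin hψmaps (x := xs)
      rwa [hψxs] at h
    have hFloc : IsLocalMinOn F (Set.Ici 0) xs := by
      have h1 : ∀ᶠ x in nhdsWithin xs (Set.Ici 0),
          obj S0 a y b ρ γstar ≤ obj S0 a y b ρ (ψ x) := htend.eventually hloc
      have h2 : ∀ᶠ x in nhdsWithin xs (Set.Ici 0), x ∈ Set.Ici 0 :=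
        eventually_mem_nhdsWithin
      filter_upwards [h1, h2] with x hx hx0
      rw [← hcompF x hx0, ← hFxs]
      exact hx
    have hmin : IsMinOn F (Set.Ici 0) xs :=
      IsMinOn.of_isLocalMinOn_of_convexOn (Set.mem_Ici.2 hxs0) hFloc hconv
    have hxg : (0:ℝ) ≤ Real.log (1 + γ * cr) := Real.log_nonneg (by nlinarith)
    have hle := isMinOn_iff.1 hmin (Real.log (1 + γ * cr)) (Set.mem_Ici.2 hxg)
    rw [hFxs, hobj γ hγ0]
    exact hle
end
end

section
/- Theorem 3 (monotonic decrease of the fixed-point iteration): Assume ρ is a loss function that is twice differentiable on (0,∞) with ρ'' ≤ 0, and a ≠ 0 (so d > 0). Let γℓ > 0 and set γℓ₊₁ = H(γℓ) = (σ̂²(γℓ) − d)/d². If γℓ₊₁ > 0, then 𝓛(γℓ₊₁) ≤ 𝓛(γℓ). -/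
open Matrix ComplexOrder

noncomputable section

/-- The scalar `d = aᴴ Σ₀⁻¹ a`. -/
def dcoef {L : ℕ} (S0 : Matrix (Fin L) (Fin L) ℂ) (a : Fin L → ℂ) : ℝ :=
  (star a ⬝ᵥ S0⁻¹ *ᵥ a).re

/-- `σ̂²(γ) = (1/(bM)) Σₘ u(sₘ(γ)) |yₘᴴ b₀|²` with `b₀ = Σ₀⁻¹ a`. -/
def sigmaHat {L M : ℕ} (S0 : Matrix (Fin L) (Fin L) ℂ) (a : Fin L → ℂ)
    (y : Fin M → Fin L → ℂ) (b : ℝ) (u : ℝ → ℝ) (γ : ℝ) : ℝ :=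
  (1 / (b * M)) * ∑ m, u (mdist S0 a (y m) γ) * Complex.normSq (star (y m) ⬝ᵥ S0⁻¹ *ᵥ a)

/-! ### Auxiliary lemmas -/

theorem aux_mat_mul_vmv {n : Type*} [Fintype n] (B : Matrix n n ℂ) (u v : n → ℂ) :
    B * vecMulVec u v = vecMulVec (B *ᵥ u) v := by
  ext i j
  simp only [vecMulVec_apply, mul_apply, mulVec, dotProduct, Finset.sum_mul]
  exact Finset.sum_congr rfl fun _ _ => by ring

theorem aux_vmv_mul_vmv {n : Type*} [Fintype n] (u v u' v' : n → ℂ) :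
    vecMulVec u v * vecMulVec u' v' = (v ⬝ᵥ u') • vecMulVec u v' := by
  ext i j
  simp only [vecMulVec_apply, mul_apply, dotProduct, Pi.smul_apply, smul_eq_mul,
    Finset.sum_mul, Matrix.smul_apply]
  exact Finset.sum_congr rfl fun _ _ => by ring

theorem aux_vmv_mulVec {n : Type*} [Fintype n] (u v x : n → ℂ) :
    vecMulVec u v *ᵥ x = (v ⬝ᵥ x) • u := by
  ext i
  simp only [vecMulVec_apply, mulVec, dotProduct, Pi.smul_apply, smul_eq_mul, Finset.sum_mul]
  exact Finset.sum_congr rfl fun _ _ => by ring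

theorem aux_herm_conj {n : Type*} [Fintype n] (P : Matrix n n ℂ) (hP : P.IsHermitian)
    (y a : n → ℂ) : star a ⬝ᵥ P *ᵥ y = star (star y ⬝ᵥ P *ᵥ a) := by
  rw [star_dotProduct, star_mulVec, hP.eq, ← dotProduct_mulVec]

theorem aux_sherman {n : Type*} [Fintype n] [DecidableEq n] (S : Matrix n n ℂ)
    (hS : S * S⁻¹ = 1) (a : n → ℂ) (γ : ℂ)
    (hne : 1 + γ * (star a ⬝ᵥ S⁻¹ *ᵥ a) ≠ 0) :
    (S + γ • vecMulVec a (star a))⁻¹ =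
      S⁻¹ - (γ / (1 + γ * (star a ⬝ᵥ S⁻¹ *ᵥ a))) •
        (S⁻¹ * vecMulVec a (star a) * S⁻¹) := by
  set P := S⁻¹ with hPdef
  set A := vecMulVec a (star a) with hAdef
  set δ := star a ⬝ᵥ P *ᵥ a with hδdef
  set c := γ / (1 + γ * δ) with hcdef
  apply Matrix.inv_eq_right_inv
  have hSP : ∀ X : Matrix n n ℂ, S * (P * X) = X := fun X => by
    rw [← Matrix.mul_assoc, hS, Matrix.one_mul]
  have hPA : P * A = vecMulVec (P *ᵥ a) (star a) := aux_mat_mul_vmv P a (star a)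
  have h2 : A * (P * (A * P)) = δ • (A * P) := by
    have h3 : A * (P * A) = δ • A := by
      rw [hPA, hAdef, aux_vmv_mul_vmv, dotProduct_mulVec, ← dotProduct_mulVec]
    calc A * (P * (A * P)) = (A * (P * A)) * P := by
          rw [Matrix.mul_assoc, Matrix.mul_assoc]
      _ = δ • (A * P) := by rw [h3, Matrix.smul_mul]
  have hc : γ - c - c * γ * δ = 0 := by
    rw [hcdef]; field_simp; ring
  calc (S + γ • A) * (P - c • (P * A * P))
      = S * P - c • (S * (P * (A * P))) + (γ • (A * P) - (c * γ) • (A * (P * (A * P)))) := by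
        rw [add_mul, mul_sub, mul_sub, Matrix.mul_smul, Matrix.mul_smul, Matrix.smul_mul,
          Matrix.smul_mul, smul_smul, Matrix.mul_assoc]
    _ = 1 - c • (A * P) + (γ • (A * P) - (c * γ) • (δ • (A * P))) := by
        rw [hS, hSP, h2]
    _ = 1 + (γ - c - c * γ * δ) • (A * P) := by
        rw [smul_smul, sub_smul, sub_smul, mul_assoc]; abel
    _ = 1 := by rw [hc, zero_smul, add_zero]

theorem aux_sig_det {n : Type*} [Fintype n] [DecidableEq n] (S : Matrix n n ℂ)
    (hu : IsUnit S.det) (a : n → ℂ) (γ : ℂ) :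
    (S + γ • vecMulVec a (star a)).det = S.det * (1 + γ * (star a ⬝ᵥ S⁻¹ *ᵥ a)) := by
  have h1 : γ • vecMulVec a (star a) = vecMulVec (γ • a) (star a) := by
    ext i j; simp [vecMulVec_apply, mul_assoc]
  have e1 : S + γ • vecMulVec a (star a)
      = S * (1 + S⁻¹ * (replicateCol (Fin 1) (γ • a) * replicateRow (Fin 1) (star a))) := by
    rw [mul_add, mul_one, ← Matrix.mul_assoc, Matrix.mul_nonsing_inv S hu, Matrix.one_mul,
      h1, vecMulVec_eq (Fin 1)]
    rfl
  rw [e1, det_mul, ← Matrix.mul_assoc, det_one_add_mul_comm, det_fin_one, Matrix.add_apply,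
    one_apply_eq, ← replicateCol_mulVec, replicateRow_mul_replicateCol_apply, mulVec_smul,
    dotProduct_smul, smul_eq_mul]

theorem aux_sig_pd {n : Type*} [Fintype n] [DecidableEq n] (S : Matrix n n ℂ)
    (hS : S.PosDef) (a : n → ℂ) (γ : ℝ) (hγ : 0 ≤ γ) :
    (S + (γ:ℂ) • vecMulVec a (star a)).PosDef := by
  apply hS.add_posSemidef
  rw [posSemidef_iff_dotProduct_mulVec]
  constructor
  · unfold Matrix.IsHermitian
    rw [conjTranspose_smul]
    have h4 : (vecMulVec a (star a))ᴴ = vecMulVec a (star a) := by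
      ext i j; simp [vecMulVec_apply, conjTranspose_apply, mul_comm]
    rw [h4]
    norm_num
  · intro x
    rw [smul_mulVec, aux_vmv_mulVec, dotProduct_smul, dotProduct_smul, smul_smul]
    have h2 : star a ⬝ᵥ x = star (star x ⬝ᵥ a) := star_dotProduct _ _
    rw [smul_eq_mul, h2, mul_assoc]
    exact mul_nonneg (Complex.zero_le_real.mpr hγ) (star_mul_self_nonneg _)

theorem aux_tangent_le (ρ : ℝ → ℝ)
    (hmono : MonotoneOn ρ (Set.Ici 0))
    (hdiff : ∀ t > (0 : ℝ), DifferentiableAt ℝ ρ t)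
    (hdiff2 : ∀ t > (0 : ℝ), DifferentiableAt ℝ (deriv ρ) t)
    (hconc : ∀ t > (0 : ℝ), deriv (deriv ρ) t ≤ 0)
    (s₀ s : ℝ) (hs₀ : 0 < s₀) (hs : 0 ≤ s) :
    ρ s ≤ ρ s₀ + deriv ρ s₀ * (s - s₀) := by
  have hanti : AntitoneOn (deriv ρ) (Set.Ioi 0) := by
    apply antitoneOn_of_deriv_nonpos (convex_Ioi 0)
    · exact fun x hx => (hdiff2 x hx).continuousAt.continuousWithinAt
    · intro x hx
      rw [interior_Ioi] at hx
      exact (hdiff2 x hx).differentiableWithinAt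
    · intro x hx
      rw [interior_Ioi] at hx
      exact hconc x hx
  have key : ∀ t > (0:ℝ), ρ t ≤ ρ s₀ + deriv ρ s₀ * (t - s₀) := by
    intro t ht
    rcases lt_trichotomy t s₀ with h | h | h
    · obtain ⟨c, hc, hc'⟩ := exists_deriv_eq_slope ρ h
        (fun x hx => (hdiff x (lt_of_lt_of_le ht hx.1)).continuousAt.continuousWithinAt)
        (fun x hx => (hdiff x (lt_trans ht hx.1)).differentiableWithinAt)
      have h1 : deriv ρ s₀ ≤ deriv ρ c :=
        hanti (Set.mem_Ioi.mpr (lt_trans ht hc.1)) (Set.mem_Ioi.mpr hs₀) hc.2.le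
      have h2 : deriv ρ c * (s₀ - t) = ρ s₀ - ρ t :=
        (eq_div_iff (by linarith : s₀ - t ≠ 0)).mp hc'
      nlinarith
    · rw [h]; simp
    · obtain ⟨c, hc, hc'⟩ := exists_deriv_eq_slope ρ h
        (fun x hx => (hdiff x (lt_of_lt_of_le hs₀ hx.1)).continuousAt.continuousWithinAt)
        (fun x hx => (hdiff x (lt_trans hs₀ hx.1)).differentiableWithinAt)
      have h1 : deriv ρ c ≤ deriv ρ s₀ :=
        hanti (Set.mem_Ioi.mpr hs₀) (Set.mem_Ioi.mpr (lt_trans hs₀ hc.1)) hc.1.le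
      have h2 : deriv ρ c * (t - s₀) = ρ t - ρ s₀ :=
        (eq_div_iff (by linarith : t - s₀ ≠ 0)).mp hc'
      nlinarith
  rcases eq_or_lt_of_le hs with h0 | h0
  · have h0' : s = 0 := h0.symm
    subst h0'
    have hev : ∀ᶠ ε in nhdsWithin (0:ℝ) (Set.Ioi 0), ρ 0 ≤ ρ s₀ + deriv ρ s₀ * (ε - s₀) := by
      filter_upwards [Ioo_mem_nhdsGT_of_mem (Set.mem_Ico.mpr ⟨le_refl (0:ℝ), hs₀⟩)]
        with ε hε
      exact le_trans (hmono (Set.mem_Ici.mpr le_rfl) (Set.mem_Ici.mpr hε.1.le) hε.1.le)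
        (key ε hε.1)
    have hlim : Filter.Tendsto (fun ε : ℝ => ρ s₀ + deriv ρ s₀ * (ε - s₀))
        (nhdsWithin (0:ℝ) (Set.Ioi 0)) (nhds (ρ s₀ + deriv ρ s₀ * (0 - s₀))) := by
      apply Filter.Tendsto.mono_left _ nhdsWithin_le_nhds
      exact (Continuous.tendsto (by continuity) 0)
    exact ge_of_tendsto hlim hev
  · exact key s h0

theorem stmt4 (L M : ℕ) (hL : 0 < L) (hM : 0 < M)
    (S0 : Matrix (Fin L) (Fin L) ℂ) (hS0 : S0.PosDef)
    (a : Fin L → ℂ) (y : Fin M → Fin L → ℂ) (b : ℝ) (hb : 0 < b)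
    (ρ : ℝ → ℝ)
    (hmono : MonotoneOn ρ (Set.Ici 0))
    (hdiff : ∀ t > (0 : ℝ), DifferentiableAt ℝ ρ t)
    (hderiv : ∀ t > (0 : ℝ), 0 ≤ deriv ρ t)
    (hgeo : ConvexOn ℝ Set.univ (fun x => ρ (Real.exp x)))
    (hdiff2 : ∀ t > (0 : ℝ), DifferentiableAt ℝ (deriv ρ) t)
    (hconc : ∀ t > (0 : ℝ), deriv (deriv ρ) t ≤ 0)
    (ha : a ≠ 0)
    (γℓ γnext : ℝ) (hγℓ : 0 < γℓ)
    (hupdate : γnext = (sigmaHat S0 a y b (deriv ρ) γℓ - dcoef S0 a) / (dcoef S0 a) ^ 2)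
    (hpos : 0 < γnext) :
    obj S0 a y b ρ γnext ≤ obj S0 a y b ρ γℓ := by
  classical
  set d := dcoef S0 a with hddef
  set σ2 := sigmaHat S0 a y b (deriv ρ) γℓ with hσdef
  -- basic positivity facts
  have hPinv : (S0⁻¹).PosDef := hS0.inv
  have hδpos : (0:ℂ) < star a ⬝ᵥ S0⁻¹ *ᵥ a := hPinv.dotProduct_mulVec_pos ha
  have hdpos : 0 < d := by
    rw [hddef]; exact (Complex.lt_def.mp hδpos).1
  have hδ : (star a ⬝ᵥ S0⁻¹ *ᵥ a) = ((d : ℝ) : ℂ) := by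
    apply Complex.ext
    · simp [hddef, dcoef]
    · simp [← (Complex.lt_def.mp hδpos).2]
  have hdet0 : (0:ℂ) < S0.det := hS0.det_pos
  have hdet0' : S0.det = ((S0.det.re : ℝ) : ℂ) := by
    apply Complex.ext
    · simp
    · simp [← (Complex.lt_def.mp hdet0).2]
  have hdet0re : 0 < S0.det.re := (Complex.lt_def.mp hdet0).1
  have hu : IsUnit S0.det := isUnit_iff_ne_zero.mpr (ne_of_gt hdet0)
  have h1γℓ : 0 < 1 + γℓ * d := by positivity
  have h1γn : 0 < 1 + γnext * d := by positivity
  -- mdist in scalar form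
  have hmd : ∀ (γ : ℝ), 0 < 1 + γ * d → ∀ m,
      mdist S0 a (y m) γ = (star (y m) ⬝ᵥ S0⁻¹ *ᵥ (y m)).re
        - γ / (1 + γ * d) * Complex.normSq (star (y m) ⬝ᵥ S0⁻¹ *ᵥ a) := by
    intro γ hγ m
    have hc : (1:ℂ) + (γ:ℂ) * (star a ⬝ᵥ S0⁻¹ *ᵥ a) ≠ 0 := by
      rw [hδ, show (1:ℂ) + (γ:ℂ) * ((d:ℝ):ℂ) = (((1 + γ*d : ℝ)):ℂ) by push_cast; ring]
      exact Complex.ofReal_ne_zero.mpr (ne_of_gt hγ)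
    have hsher := aux_sherman S0 (Matrix.mul_nonsing_inv S0 hu) a (γ:ℂ) hc
    simp only [mdist, Sig]
    rw [hsher, sub_mulVec, dotProduct_sub, smul_mulVec, dotProduct_smul]
    have hPAP : (S0⁻¹ * vecMulVec a (star a) * S0⁻¹) *ᵥ (y m)
        = (star a ⬝ᵥ (S0⁻¹ *ᵥ (y m))) • (S0⁻¹ *ᵥ a) := by
      rw [← mulVec_mulVec, ← mulVec_mulVec, aux_vmv_mulVec, mulVec_smul]
    rw [hPAP, dotProduct_smul, smul_eq_mul, smul_eq_mul]
    have he : star a ⬝ᵥ S0⁻¹ *ᵥ (y m) = star (star (y m) ⬝ᵥ S0⁻¹ *ᵥ a) :=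
      aux_herm_conj S0⁻¹ hPinv.1 (y m) a
    set e := star (y m) ⬝ᵥ S0⁻¹ *ᵥ a with hedef
    have he2 : star e * e = ((Complex.normSq e : ℝ) : ℂ) := by
      rw [Complex.star_def, mul_comm, Complex.mul_conj]
    rw [he, he2, hδ]
    rw [show (γ:ℂ) / (1 + (γ:ℂ) * ((d:ℝ):ℂ)) * ((Complex.normSq e : ℝ) : ℂ)
        = ((γ / (1 + γ * d) * Complex.normSq e : ℝ) : ℂ) by push_cast; ring]
    rw [Complex.sub_re, Complex.ofReal_re]
  -- determinant in scalar form
  have hld : ∀ (γ : ℝ), 0 < 1 + γ * d →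
      Real.log ((Sig S0 a γ).det.re) = Real.log (S0.det.re) + Real.log (1 + γ * d) := by
    intro γ hγ
    have h5 : (Sig S0 a γ).det = S0.det * (((1 + γ * d : ℝ)) : ℂ) := by
      simp only [Sig]
      rw [aux_sig_det S0 hu a (γ:ℂ), hδ]
      push_cast; ring
    have h6 : (Sig S0 a γ).det.re = S0.det.re * (1 + γ * d) := by
      rw [h5]; simp [Complex.mul_re]
    rw [h6, Real.log_mul (ne_of_gt hdet0re) (ne_of_gt hγ)]
  -- positivity of mdist
  have hmdpos : ∀ (γ : ℝ), 0 ≤ γ → ∀ m, y m ≠ 0 → 0 < mdist S0 a (y m) γ := by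
    intro γ hγ m hym
    have hpd : (Sig S0 a γ).PosDef := by
      simpa only [Sig] using aux_sig_pd S0 hS0 a γ hγ
    have := hpd.inv.re_dotProduct_pos hym
    simpa [mdist] using this
  have hmdnn : ∀ (γ : ℝ), 0 ≤ γ → ∀ m, 0 ≤ mdist S0 a (y m) γ := by
    intro γ hγ m
    by_cases hym : y m = 0
    · simp [mdist, hym]
    · exact (hmdpos γ hγ m hym).le
  -- per-sample surrogate inequality
  have hρm : ∀ m, ρ (mdist S0 a (y m) γnext) ≤ ρ (mdist S0 a (y m) γℓ)
      + deriv ρ (mdist S0 a (y m) γℓ) * (mdist S0 a (y m) γnext - mdist S0 a (y m) γℓ) := by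
    intro m
    by_cases hym : y m = 0
    · simp [mdist, hym]
    · exact aux_tangent_le ρ hmono hdiff hdiff2 hconc _ _
        (hmdpos γℓ hγℓ.le m hym) (hmdnn γnext hpos.le m)
  -- abbreviations
  set tl := γℓ / (1 + γℓ * d) with htl
  set tn := γnext / (1 + γnext * d) with htn
  set km := fun m => Complex.normSq (star (y m) ⬝ᵥ S0⁻¹ *ᵥ a) with hkm
  have hB : 0 < 1 / (b * M) := by
    have : (0:ℝ) < M := by exact_mod_cast hM
    positivity
  -- sum inequality
  have hsum : ∑ m, ρ (mdist S0 a (y m) γnext)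
      ≤ ∑ m, ρ (mdist S0 a (y m) γℓ) + (tl - tn) * ∑ m, deriv ρ (mdist S0 a (y m) γℓ) * km m := by
    calc ∑ m, ρ (mdist S0 a (y m) γnext)
        ≤ ∑ m, (ρ (mdist S0 a (y m) γℓ)
            + deriv ρ (mdist S0 a (y m) γℓ) * (mdist S0 a (y m) γnext - mdist S0 a (y m) γℓ)) :=
          Finset.sum_le_sum fun m _ => hρm m
      _ = ∑ m, ρ (mdist S0 a (y m) γℓ) + (tl - tn) * ∑ m, deriv ρ (mdist S0 a (y m) γℓ) * km m := by
          rw [Finset.sum_add_distrib, Finset.mul_sum]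
          congr 1
          apply Finset.sum_congr rfl
          intro m _
          rw [hmd γℓ h1γℓ m, hmd γnext h1γn m]
          ring
  -- σ2 identity
  have hσ2 : σ2 = (1 / (b * M)) * ∑ m, deriv ρ (mdist S0 a (y m) γℓ) * km m := rfl
  -- update equation
  have hupd : σ2 = γnext * d^2 + d := by
    have hd0 : d ≠ 0 := ne_of_gt hdpos
    rw [hupdate, div_mul_cancel₀ _ (pow_ne_zero 2 hd0)]
    ring
  -- key scalar inequality : (tl - tn) * σ2 + log(1+γnext d) - log(1+γℓ d) ≤ 0
  have hkey : (tl - tn) * σ2 + Real.log (1 + γnext * d) - Real.log (1 + γℓ * d) ≤ 0 := by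
    have hr : Real.log (1 + γnext * d) - Real.log (1 + γℓ * d)
        = Real.log ((1 + γnext * d) / (1 + γℓ * d)) := by
      rw [Real.log_div (ne_of_gt h1γn) (ne_of_gt h1γℓ)]
    have hlog : Real.log ((1 + γnext * d) / (1 + γℓ * d))
        ≤ (1 + γnext * d) / (1 + γℓ * d) - 1 :=
      Real.log_le_sub_one_of_pos (by positivity)
    have heq : (tn - tl) * σ2 = (1 + γnext * d) / (1 + γℓ * d) - 1 := by
      rw [htn, htl, hupd]
      field_simp
      ring
    linarith [hr, hlog, heq]
  -- put everything together
  have hobjn : obj S0 a y b ρ γnext = (1 / (b * M)) * ∑ m, ρ (mdist S0 a (y m) γnext)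
      + Real.log (S0.det.re) + Real.log (1 + γnext * d) := by
    rw [obj, hld γnext h1γn]; ring
  have hobjl : obj S0 a y b ρ γℓ = (1 / (b * M)) * ∑ m, ρ (mdist S0 a (y m) γℓ)
      + Real.log (S0.det.re) + Real.log (1 + γℓ * d) := by
    rw [obj, hld γℓ h1γℓ]; ring
  rw [hobjn, hobjl]
  have hmul : (1 / (b * M)) * ∑ m, ρ (mdist S0 a (y m) γnext)
      ≤ (1 / (b * M)) * ∑ m, ρ (mdist S0 a (y m) γℓ) + (tl - tn) * σ2 := by
    calc (1 / (b * M)) * ∑ m, ρ (mdist S0 a (y m) γnext)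
        ≤ (1 / (b * M)) * (∑ m, ρ (mdist S0 a (y m) γℓ)
            + (tl - tn) * ∑ m, deriv ρ (mdist S0 a (y m) γℓ) * km m) :=
          mul_le_mul_of_nonneg_left hsum hB.le
      _ = (1 / (b * M)) * ∑ m, ρ (mdist S0 a (y m) γℓ) + (tl - tn) * σ2 := by
          rw [hσ2]; ring
  linarith
end
end

section
/- Fixed-point characterization of interior critical points (Equations 28–29): Assume ρ is a loss function and a ≠ 0 (so d > 0). For γ > 0, the derivative of the conditional objective satisfies 𝓛'(γ) = −σ̂²(γ)/(1+γd)² + d/(1+γd); consequently 𝓛'(γ) = 0 if and only if γ = H(γ) = (σ̂²(γ) − d)/d². -/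
open Matrix ComplexOrder

noncomputable section

namespace Stmt11Aux

variable {L : ℕ} (S0 : Matrix (Fin L) (Fin L) ℂ) (a y : Fin L → ℂ)

lemma psd_outer : (vecMulVec a (star a)).PosSemidef := by
  have : vecMulVec a (star a) = replicateCol Unit a * (replicateCol Unit a)ᴴ := by
    rw [vecMulVec_eq Unit, conjTranspose_replicateCol]
  rw [this]
  exact posSemidef_self_mul_conjTranspose _

lemma smul_outer {γ : ℝ} (hγ : 0 ≤ γ) :
    (γ : ℂ) • vecMulVec a (star a)
      = vecMulVec ((Real.sqrt γ : ℂ) • a) (star ((Real.sqrt γ : ℂ) • a)) := by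
  ext i j
  simp only [Matrix.smul_apply, vecMulVec_apply, Pi.star_apply, Pi.smul_apply, smul_eq_mul,
    star_mul', Complex.star_def, Complex.conj_ofReal]
  have : (Real.sqrt γ : ℂ) * (Real.sqrt γ : ℂ) = (γ : ℂ) := by
    rw [← Complex.ofReal_mul, Real.mul_self_sqrt hγ]
  rw [← this]
  ring

lemma sig_posDef (hS0 : S0.PosDef) {γ : ℝ} (hγ : 0 ≤ γ) : (Sig S0 a γ).PosDef := by
  rw [Sig, smul_outer a hγ]
  exact hS0.add_posSemidef (psd_outer _)

lemma psd_dot_real {M : Matrix (Fin L) (Fin L) ℂ} (hM : M.PosSemidef) (x : Fin L → ℂ) :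
    star x ⬝ᵥ M *ᵥ x = ((star x ⬝ᵥ M *ᵥ x).re : ℂ) := by
  have h := hM.dotProduct_mulVec_nonneg x
  rw [Complex.le_def] at h
  exact (Complex.ext rfl (by simpa using h.2.symm))

lemma dcoef_complex (hS0 : S0.PosDef) : star a ⬝ᵥ S0⁻¹ *ᵥ a = (dcoef S0 a : ℂ) :=
  psd_dot_real hS0.inv.posSemidef a

lemma dcoef_nonneg (hS0 : S0.PosDef) : 0 ≤ dcoef S0 a := by
  have h := hS0.inv.posSemidef.dotProduct_mulVec_nonneg a
  rw [Complex.le_def] at h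
  simpa [dcoef] using h.1

lemma dcoef_pos (hS0 : S0.PosDef) (ha : a ≠ 0) : 0 < dcoef S0 a := by
  have h := hS0.inv.dotProduct_mulVec_pos ha
  rw [Complex.lt_def] at h
  simpa [dcoef] using h.1

lemma vmv_triple (M : Matrix (Fin L) (Fin L) ℂ) :
    vecMulVec a (star a) * M * vecMulVec a (star a)
      = (star a ⬝ᵥ M *ᵥ a) • vecMulVec a (star a) := by
  ext i j
  simp [Matrix.mul_apply, vecMulVec_apply, dotProduct, mulVec, Finset.sum_mul, Finset.mul_sum]
  rw [Finset.sum_comm]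
  congr 1; ext k
  congr 1; ext l
  ring

lemma sig_inv (hS0 : S0.PosDef) {γ : ℝ} (hγ : 0 ≤ γ) :
    (Sig S0 a γ)⁻¹
      = S0⁻¹ - ((γ / (1 + γ * dcoef S0 a) : ℝ) : ℂ) • (S0⁻¹ * vecMulVec a (star a) * S0⁻¹) := by
  set d : ℝ := dcoef S0 a with hdd
  have hd : 0 ≤ d := dcoef_nonneg S0 a hS0
  have hp : (0:ℝ) < 1 + γ * d := by positivity
  set c : ℝ := γ / (1 + γ * d) with hcc
  set V := vecMulVec a (star a) with hV
  have hSi : S0 * S0⁻¹ = 1 :=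
    Matrix.mul_nonsing_inv _ ((Matrix.isUnit_iff_isUnit_det _).1 hS0.isUnit)
  apply Matrix.inv_eq_right_inv
  have e1 : S0 * (S0⁻¹ * V * S0⁻¹) = V * S0⁻¹ := by
    rw [← Matrix.mul_assoc, ← Matrix.mul_assoc, hSi, Matrix.one_mul]
  have e2 : V * (S0⁻¹ * V * S0⁻¹) = ((d:ℂ)) • (V * S0⁻¹) := by
    rw [show V * (S0⁻¹ * V * S0⁻¹) = (V * S0⁻¹ * V) * S0⁻¹ by
          rw [Matrix.mul_assoc, Matrix.mul_assoc, Matrix.mul_assoc],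
        vmv_triple, dcoef_complex S0 a hS0, Matrix.smul_mul]
  rw [Sig, Matrix.add_mul, Matrix.mul_sub, Matrix.mul_smul, hSi, e1,
      Matrix.smul_mul, Matrix.mul_sub, Matrix.mul_smul, e2, smul_smul]
  rw [← hV, smul_sub, smul_smul]
  have hc0 : ((γ:ℂ)) - (c:ℂ) - (γ:ℂ) * (c:ℂ) * (d:ℂ) = 0 := by
    have h1 : c * (1 + γ * d) = γ := div_mul_cancel₀ _ hp.ne'
    have h2 : (c:ℂ) * (1 + (γ:ℂ) * (d:ℂ)) = (γ:ℂ) := by exact_mod_cast congrArg Complex.ofReal h1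
    linear_combination -h2
  have key : (1 : Matrix (Fin L) (Fin L) ℂ) - (c:ℂ) • (V * S0⁻¹)
      + ((γ:ℂ) • (V * S0⁻¹) - ((γ:ℂ) * ((c:ℂ) * (d:ℂ))) • (V * S0⁻¹))
      = 1 + (((γ:ℂ) - (c:ℂ) - (γ:ℂ) * (c:ℂ) * (d:ℂ))) • (V * S0⁻¹) := by
    rw [sub_smul, sub_smul, mul_assoc]
    abel
  rw [key, hc0, zero_smul, add_zero]

lemma sig_det (hS0 : S0.PosDef) (γ : ℝ) :
    (Sig S0 a γ).det = S0.det * ((1 + γ * dcoef S0 a : ℝ) : ℂ) := by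
  have hUnit : IsUnit S0.det := (Matrix.isUnit_iff_isUnit_det _).1 hS0.isUnit
  have hrw : Sig S0 a γ = S0 + replicateCol Unit ((γ:ℂ) • a) * replicateRow Unit (star a) := by
    rw [Sig, ← vecMulVec_eq Unit]
    congr 1
    ext i j
    simp [vecMulVec_apply]
    ring
  rw [hrw, Matrix.det_add_replicateCol_mul_replicateRow hUnit]
  have : (1 + replicateRow Unit (star a) * S0⁻¹ * replicateCol Unit ((γ:ℂ) • a)).det
      = 1 + (γ:ℂ) * (star a ⬝ᵥ S0⁻¹ *ᵥ a) := by
    rw [Matrix.det_unique]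
    simp [Matrix.add_apply, Matrix.one_apply, Matrix.mul_apply, replicateRow_apply, replicateCol_apply,
      dotProduct, mulVec, Finset.mul_sum, Finset.sum_mul]
    rw [Finset.sum_comm]
    congr 1; ext k
    congr 1; ext l
    ring
  rw [this, dcoef_complex S0 a hS0]
  push_cast
  ring

lemma herm_conj {M : Matrix (Fin L) (Fin L) ℂ} (hM : M.IsHermitian) :
    star a ⬝ᵥ M *ᵥ y = star (star y ⬝ᵥ M *ᵥ a) := by
  rw [star_dotProduct, star_mulVec, ← dotProduct_mulVec, hM.eq]

lemma vmv_mulVec (w : Fin L → ℂ) : vecMulVec a (star a) *ᵥ w = (star a ⬝ᵥ w) • a := by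
  ext i
  simp [vecMulVec_apply, mulVec, dotProduct, Finset.sum_mul, Finset.mul_sum, mul_comm,
    mul_left_comm]

lemma mdist_eq (hS0 : S0.PosDef) {γ : ℝ} (hγ : 0 ≤ γ) :
    mdist S0 a y γ = (star y ⬝ᵥ S0⁻¹ *ᵥ y).re
      - γ / (1 + γ * dcoef S0 a) * Complex.normSq (star y ⬝ᵥ S0⁻¹ *ᵥ a) := by
  rw [mdist, sig_inv S0 a hS0 hγ, Matrix.sub_mulVec, dotProduct_sub, Matrix.smul_mulVec,
    dotProduct_smul]
  have e3 : star y ⬝ᵥ (S0⁻¹ * vecMulVec a (star a) * S0⁻¹) *ᵥ y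
      = ((Complex.normSq (star y ⬝ᵥ S0⁻¹ *ᵥ a) : ℝ) : ℂ) := by
    rw [← Matrix.mulVec_mulVec, ← Matrix.mulVec_mulVec, vmv_mulVec, Matrix.mulVec_smul,
      dotProduct_smul, herm_conj a y hS0.inv.isHermitian]
    set z := star y ⬝ᵥ S0⁻¹ *ᵥ a
    rw [smul_eq_mul, Complex.star_def, mul_comm, Complex.mul_conj]
  rw [e3]
  have e4 : ((γ / (1 + γ * dcoef S0 a) : ℝ) : ℂ) • ((Complex.normSq (star y ⬝ᵥ S0⁻¹ *ᵥ a) : ℝ) : ℂ)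
      = ((γ / (1 + γ * dcoef S0 a) * Complex.normSq (star y ⬝ᵥ S0⁻¹ *ᵥ a) : ℝ) : ℂ) := by
    rw [smul_eq_mul, ← Complex.ofReal_mul]
  rw [e4, Complex.sub_re, Complex.ofReal_re]

lemma mdist_pos (hS0 : S0.PosDef) {γ : ℝ} (hγ : 0 ≤ γ) (hy : y ≠ 0) :
    0 < mdist S0 a y γ := by
  have h := ((sig_posDef S0 a hS0 hγ).inv).dotProduct_mulVec_pos hy
  rw [Complex.lt_def] at h
  simpa [mdist] using h.1

lemma det_re_pos (hS0 : S0.PosDef) : 0 < S0.det.re := by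
  have h := hS0.det_pos
  rw [Complex.lt_def] at h
  simpa using h.1

lemma det_im_zero (hS0 : S0.PosDef) : S0.det.im = 0 := by
  have h := hS0.det_pos
  rw [Complex.lt_def] at h
  simpa using h.2.symm

lemma sig_det_re (hS0 : S0.PosDef) (γ : ℝ) :
    (Sig S0 a γ).det.re = S0.det.re * (1 + γ * dcoef S0 a) := by
  have h0 : S0.det = ((S0.det.re : ℝ) : ℂ) := Complex.ext rfl (by simpa using det_im_zero S0 hS0)
  rw [sig_det S0 a hS0 γ, h0, ← Complex.ofReal_mul, Complex.ofReal_re]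
  simp

end Stmt11Aux

open Stmt11Aux in
theorem stmt11 (L M : ℕ) (hL : 0 < L) (hM : 0 < M)
    (S0 : Matrix (Fin L) (Fin L) ℂ) (hS0 : S0.PosDef)
    (a : Fin L → ℂ) (y : Fin M → Fin L → ℂ) (b : ℝ) (hb : 0 < b)
    (ρ : ℝ → ℝ)
    (hmono : MonotoneOn ρ (Set.Ici 0))
    (hdiff : ∀ t > (0 : ℝ), DifferentiableAt ℝ ρ t)
    (hderiv : ∀ t > (0 : ℝ), 0 ≤ deriv ρ t)
    (hgeo : ConvexOn ℝ Set.univ (fun x => ρ (Real.exp x)))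
    (ha : a ≠ 0) :
    ∀ γ > (0 : ℝ),
      deriv (obj S0 a y b ρ) γ
          = -(sigmaHat S0 a y b (deriv ρ) γ) / (1 + γ * dcoef S0 a) ^ 2
            + dcoef S0 a / (1 + γ * dcoef S0 a) ∧
      (deriv (obj S0 a y b ρ) γ = 0 ↔
        γ = (sigmaHat S0 a y b (deriv ρ) γ - dcoef S0 a) / (dcoef S0 a) ^ 2) := by
  intro γ hγ
  set d : ℝ := dcoef S0 a with hdd
  have hd : 0 < d := dcoef_pos S0 a hS0 ha
  have hp : (0:ℝ) < 1 + γ * d := by positivity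
  set K : Fin M → ℝ := fun m => Complex.normSq (star (y m) ⬝ᵥ S0⁻¹ *ᵥ a) with hK
  set C : Fin M → ℝ := fun m => (star (y m) ⬝ᵥ S0⁻¹ *ᵥ (y m)).re with hC
  set g : ℝ → ℝ := fun x =>
    (1 / (b * M)) * ∑ m, ρ (C m - x / (1 + x * d) * K m)
      + Real.log (S0.det.re * (1 + x * d)) with hg
  have hobj : ∀ x ∈ Set.Ioi (0:ℝ), obj S0 a y b ρ x = g x := by
    intro x hx
    have hx0 : (0:ℝ) ≤ x := le_of_lt hx
    rw [obj, hg]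
    congr 1
    · congr 1
      refine Finset.sum_congr rfl fun m _ => ?_
      rw [mdist_eq S0 a (y m) hS0 hx0]
    · rw [sig_det_re S0 a hS0 x]
  have hEv : obj S0 a y b ρ =ᶠ[nhds γ] g :=
    Filter.eventuallyEq_of_mem (Ioi_mem_nhds hγ) hobj
  -- derivative of the per-sample inner function
  have h1 : HasDerivAt (fun x : ℝ => x / (1 + x * d)) (1 / (1 + γ * d) ^ 2) γ := by
    have := (hasDerivAt_id γ).div ((hasDerivAt_const γ (1:ℝ)).add ((hasDerivAt_id γ).mul_const d))
      hp.ne'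
    refine this.congr_deriv ?_
    simp only [Pi.add_apply, id]
    ring
  have hterm : ∀ m : Fin M, HasDerivAt (fun x : ℝ => ρ (C m - x / (1 + x * d) * K m))
      (deriv ρ (C m - γ / (1 + γ * d) * K m) * (-(1 / (1 + γ * d) ^ 2) * K m)) γ := by
    intro m
    by_cases hy0 : y m = 0
    · have hC0 : C m = 0 := by simp [hC, hy0]
      have hK0 : K m = 0 := by simp [hK, hy0]
      rw [hC0, hK0]
      simpa using hasDerivAt_const γ (ρ (0 - 0))
    · have hInner : HasDerivAt (fun x : ℝ => C m - x / (1 + x * d) * K m)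
          (-(1 / (1 + γ * d) ^ 2) * K m) γ := by
        have := (hasDerivAt_const γ (C m)).sub (h1.mul_const (K m))
        refine this.congr_deriv ?_
        ring
      have ht : 0 < C m - γ / (1 + γ * d) * K m := by
        rw [← mdist_eq S0 a (y m) hS0 (le_of_lt hγ)]
        exact mdist_pos S0 a (y m) hS0 (le_of_lt hγ) hy0
      exact ((hdiff _ ht).hasDerivAt).comp γ hInner
  have hsum : HasDerivAt (fun x : ℝ => (1 / (b * M)) * ∑ m, ρ (C m - x / (1 + x * d) * K m))
      ((1 / (b * M)) * ∑ m, deriv ρ (C m - γ / (1 + γ * d) * K m)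
        * (-(1 / (1 + γ * d) ^ 2) * K m)) γ :=
    (HasDerivAt.fun_sum (fun m _ => hterm m)).const_mul _
  have hlog : HasDerivAt (fun x : ℝ => Real.log (S0.det.re * (1 + x * d)))
      (d / (1 + γ * d)) γ := by
    have hin : HasDerivAt (fun x : ℝ => S0.det.re * (1 + x * d)) (S0.det.re * d) γ :=
      ((hasDerivAt_const γ (1:ℝ)).add ((hasDerivAt_id γ).mul_const d)).const_mul _ |>.congr_deriv
        (by ring)
    have hne : S0.det.re * (1 + γ * d) ≠ 0 := by
      have := det_re_pos S0 hS0
      positivity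
    have := hin.log hne
    convert this using 1
    rw [mul_div_mul_left _ _ (det_re_pos S0 hS0).ne']
  have hg' : HasDerivAt g
      ((1 / (b * M)) * ∑ m, deriv ρ (C m - γ / (1 + γ * d) * K m)
        * (-(1 / (1 + γ * d) ^ 2) * K m) + d / (1 + γ * d)) γ := hsum.add hlog
  have hderiv_obj : deriv (obj S0 a y b ρ) γ
      = (1 / (b * M)) * ∑ m, deriv ρ (C m - γ / (1 + γ * d) * K m)
        * (-(1 / (1 + γ * d) ^ 2) * K m) + d / (1 + γ * d) := by
    rw [hEv.deriv_eq, hg'.deriv]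
  have hsig : sigmaHat S0 a y b (deriv ρ) γ
      = (1 / (b * M)) * ∑ m, deriv ρ (C m - γ / (1 + γ * d) * K m) * K m := by
    rw [sigmaHat]
    congr 1
    refine Finset.sum_congr rfl fun m _ => ?_
    rw [mdist_eq S0 a (y m) hS0 (le_of_lt hγ)]
  have main : deriv (obj S0 a y b ρ) γ
      = -(sigmaHat S0 a y b (deriv ρ) γ) / (1 + γ * d) ^ 2 + d / (1 + γ * d) := by
    rw [hderiv_obj, hsig]
    have : ∑ m, deriv ρ (C m - γ / (1 + γ * d) * K m) * (-(1 / (1 + γ * d) ^ 2) * K m)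
        = (∑ m, deriv ρ (C m - γ / (1 + γ * d) * K m) * K m) * (-(1 / (1 + γ * d) ^ 2)) := by
      rw [Finset.sum_mul]
      exact Finset.sum_congr rfl fun m _ => by ring
    rw [this]
    ring
  refine ⟨main, ?_⟩
  rw [main]
  set σ : ℝ := sigmaHat S0 a y b (deriv ρ) γ with hσ
  constructor
  · intro h
    have h2 : d * (1 + γ * d) = σ := by
      have hp2 : (0:ℝ) < (1 + γ * d) ^ 2 := by positivity
      have hh := h
      field_simp at hh
      exact mul_left_cancel₀ hp.ne' (by nlinarith [hh])
    field_simp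
    nlinarith [h2]
  · intro h
    have h2 : γ * d ^ 2 = σ - d := by
      rw [h]
      field_simp
    have : σ = d * (1 + γ * d) := by nlinarith [h2]
    rw [this]
    field_simp
    ring
end
end

section
/- The t-loss is a loss function: For ν > 0 and a positive integer L, define ρ_T(t) = ((ν + 2L)/2) · log(ν + 2t) for t ≥ 0. Then ρ_T is continuous and nondecreasing on [0,∞), differentiable on (0,∞) with derivative u_T(t) = (ν + 2L)/(ν + 2t), and the map x ↦ ρ_T(exp x) is convex on ℝ. -/
noncomputable section

/-- The t-loss function. -/
def tLoss (ν : ℝ) (L : ℕ) (t : ℝ) : ℝ :=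
  ((ν + 2 * L) / 2) * Real.log (ν + 2 * t)

theorem stmt15 (ν : ℝ) (hν : 0 < ν) (L : ℕ) (hL : 0 < L) :
    ContinuousOn (tLoss ν L) (Set.Ici 0) ∧
    MonotoneOn (tLoss ν L) (Set.Ici 0) ∧
    (∀ t > (0 : ℝ), HasDerivAt (tLoss ν L) ((ν + 2 * L) / (ν + 2 * t)) t) ∧
    ConvexOn ℝ Set.univ (fun x : ℝ => tLoss ν L (Real.exp x)) := by
  have hc : (0:ℝ) < (ν + 2 * L) / 2 := by positivity
  refine ⟨?_, ?_, ?_, ?_⟩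
  · apply ContinuousOn.mul continuousOn_const
    apply ContinuousOn.log
    · exact (continuous_const.add (continuous_const.mul continuous_id)).continuousOn
    · intro t ht
      have : (0:ℝ) < ν + 2 * t := by
        have : (0:ℝ) ≤ t := ht
        linarith
      exact ne_of_gt this
  · intro a ha b hb hab
    have ha' : (0:ℝ) ≤ a := ha
    have hb' : (0:ℝ) ≤ b := hb
    unfold tLoss
    have hlog : Real.log (ν + 2 * a) ≤ Real.log (ν + 2 * b) := by
      apply Real.log_le_log (by linarith) (by linarith)
    nlinarith
  · intro t ht
    have h1 : (0:ℝ) < ν + 2 * t := by linarith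
    have h2 : HasDerivAt (fun t : ℝ => ν + 2 * t) 2 t := by
      simpa using ((hasDerivAt_id t).const_mul (2:ℝ)).const_add ν
    have h3 : HasDerivAt (fun t : ℝ => Real.log (ν + 2 * t)) (2 / (ν + 2 * t)) t :=
      h2.log (ne_of_gt h1)
    have := h3.const_mul ((ν + 2 * L) / 2)
    refine this.congr_deriv ?_
    field_simp
  · have key : ∀ x : ℝ, HasDerivAt (fun x : ℝ => tLoss ν L (Real.exp x))
        ((ν + 2 * L) / (ν * Real.exp (-x) + 2)) x := by
      intro x
      have hex : (0:ℝ) < Real.exp x := Real.exp_pos x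
      have h1 : (0:ℝ) < ν + 2 * Real.exp x := by linarith
      have h2 : HasDerivAt (fun x : ℝ => ν + 2 * Real.exp x) (2 * Real.exp x) x := by
        simpa using ((Real.hasDerivAt_exp x).const_mul (2:ℝ)).const_add ν
      have h3 : HasDerivAt (fun x : ℝ => Real.log (ν + 2 * Real.exp x))
          (2 * Real.exp x / (ν + 2 * Real.exp x)) x := h2.log (ne_of_gt h1)
      have h4 := h3.const_mul ((ν + 2 * L) / 2)
      refine h4.congr_deriv ?_
      rw [Real.exp_neg]
      field_simp
    have hmono : Monotone (fun x : ℝ => (ν + 2 * L) / (ν * Real.exp (-x) + 2)) := by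
      intro a b hab
      have h1 : (0:ℝ) < ν * Real.exp (-b) + 2 := by positivity
      have h2 : Real.exp (-b) ≤ Real.exp (-a) := Real.exp_le_exp.2 (by linarith)
      have h3 : ν * Real.exp (-b) + 2 ≤ ν * Real.exp (-a) + 2 := by nlinarith
      exact div_le_div_of_nonneg_left (by positivity) h1 h3
    have hdiff : ∀ x : ℝ, DifferentiableAt ℝ (fun x : ℝ => tLoss ν L (Real.exp x)) x :=
      fun x => (key x).differentiableAt
    have hderiv : deriv (fun x : ℝ => tLoss ν L (Real.exp x)) =
        fun x => (ν + 2 * L) / (ν * Real.exp (-x) + 2) :=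
      funext fun x => (key x).deriv
    apply MonotoneOn.convexOn_of_deriv convex_univ
      (fun x _ => (hdiff x).continuousAt.continuousWithinAt)
      (fun x _ => (hdiff x).differentiableWithinAt)
    rw [interior_univ, hderiv]
    exact hmono.monotoneOn _
end
end

section
/- Coercivity of the conditional objective (proof of Theorem 2(b)): If ρ is a loss function that is bounded below and a ≠ 0 (so d = a^H Σ₀⁻¹ a > 0), then 𝓛(γ) → ∞ as γ → ∞; in particular, for every real number C there exists γ₀ such that 𝓛(γ) > C for all γ > γ₀. -/
open Matrix ComplexOrder

noncomputable section

lemma smul_vecMulVec_posSemidef {L : ℕ} (a : Fin L → ℂ) {γ : ℝ} (hγ : 0 ≤ γ) :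
    ((γ : ℂ) • vecMulVec a (star a)).PosSemidef := by
  have hs : ((Real.sqrt γ : ℂ)) * (Real.sqrt γ : ℂ) = (γ : ℂ) := by
    rw [← Complex.ofReal_mul, Real.mul_self_sqrt hγ]
  have key : (γ : ℂ) • vecMulVec a (star a)
      = replicateCol Unit ((Real.sqrt γ : ℂ) • a) * (replicateCol Unit ((Real.sqrt γ : ℂ) • a))ᴴ := by
    rw [conjTranspose_replicateCol, ← vecMulVec_eq]
    ext i j
    simp [vecMulVec]
    rw [← hs]; ring
  rw [key]
  exact posSemidef_self_mul_conjTranspose _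

lemma sig_det_eq {L : ℕ} (S0 : Matrix (Fin L) (Fin L) ℂ) (hS0 : S0.PosDef)
    (a : Fin L → ℂ) (γ : ℝ) :
    (Sig S0 a γ).det = S0.det * (1 + (γ : ℂ) * (star a ⬝ᵥ S0⁻¹ *ᵥ a)) := by
  have h1 : (γ : ℂ) • vecMulVec a (star a) = replicateCol Unit ((γ:ℂ) • a) * replicateRow Unit (star a) := by
    rw [← vecMulVec_eq]; ext i j; simp [vecMulVec]; ring
  have hu : IsUnit S0.det := hS0.det_pos.ne'.isUnit
  rw [Sig, h1, det_add_replicateCol_mul_replicateRow hu]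
  congr 1
  rw [det_unique]
  simp [Matrix.mul_apply, Matrix.mulVec, dotProduct, Finset.mul_sum, Finset.sum_mul]
  rw [Finset.sum_comm]
  exact Finset.sum_congr rfl fun _ _ => Finset.sum_congr rfl fun _ _ => by ring

theorem stmt17 (L M : ℕ) (hL : 0 < L) (hM : 0 < M)
    (S0 : Matrix (Fin L) (Fin L) ℂ) (hS0 : S0.PosDef)
    (a : Fin L → ℂ) (y : Fin M → Fin L → ℂ) (b : ℝ) (hb : 0 < b)
    (ρ : ℝ → ℝ)
    (hmono : MonotoneOn ρ (Set.Ici 0))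
    (hdiff : ∀ t > (0 : ℝ), DifferentiableAt ℝ ρ t)
    (hderiv : ∀ t > (0 : ℝ), 0 ≤ deriv ρ t)
    (hgeo : ConvexOn ℝ Set.univ (fun x => ρ (Real.exp x)))
    (hbdd : ∃ r : ℝ, ∀ t ≥ (0 : ℝ), r ≤ ρ t)
    (ha : a ≠ 0) :
    Filter.Tendsto (obj S0 a y b ρ) Filter.atTop Filter.atTop := by
  obtain ⟨r, hr⟩ := hbdd
  set d : ℝ := dcoef S0 a with hd_def
  set s : ℝ := S0.det.re with hs_def
  -- positivity of d
  have hc0pos : (0 : ℂ) < star a ⬝ᵥ S0⁻¹ *ᵥ a := hS0.inv.dotProduct_mulVec_pos ha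
  have hc0 : (star a ⬝ᵥ S0⁻¹ *ᵥ a) = (d : ℂ) := by
    obtain ⟨hre, him⟩ := Complex.lt_def.mp hc0pos
    exact Complex.ext rfl (by simpa using him.symm)
  have hd : 0 < d := by
    have := Complex.lt_def.mp hc0pos
    simpa [hd_def, dcoef] using this.1
  -- positivity of s
  have hdetpos : (0 : ℂ) < S0.det := hS0.det_pos
  have hsdet : S0.det = (s : ℂ) := by
    obtain ⟨hre, him⟩ := Complex.lt_def.mp hdetpos
    exact Complex.ext rfl (by simpa using him.symm)
  have hs : 0 < s := by
    have := Complex.lt_def.mp hdetpos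
    simpa using this.1
  -- determinant formula
  have hdet : ∀ γ : ℝ, (Sig S0 a γ).det.re = s * (1 + γ * d) := by
    intro γ
    rw [sig_det_eq S0 hS0 a γ, hc0, hsdet]
    have : ((s : ℂ)) * (1 + (γ:ℂ) * (d:ℂ)) = ((s * (1 + γ * d) : ℝ) : ℂ) := by
      push_cast; ring
    rw [this, Complex.ofReal_re]
  -- positive definiteness of Sig for γ ≥ 0
  have hposdef : ∀ γ : ℝ, 0 ≤ γ → (Sig S0 a γ).PosDef := fun γ hγ =>
    hS0.add_posSemidef (smul_vecMulVec_posSemidef a hγ)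
  have hmdist : ∀ γ : ℝ, 0 ≤ γ → ∀ m, 0 ≤ mdist S0 a (y m) γ := by
    intro γ hγ m
    have := ((hposdef γ hγ).inv.posSemidef).re_dotProduct_nonneg (y m)
    simpa [mdist] using this
  -- the lower bound function
  have hMpos : (0 : ℝ) < M := by exact_mod_cast hM
  set K : ℝ := (1 / (b * M)) * (M * r) with hK_def
  have hg : Filter.Tendsto (fun γ : ℝ => K + Real.log (s * (1 + γ * d)))
      Filter.atTop Filter.atTop := by
    have h1 : Filter.Tendsto (fun γ : ℝ => γ * d) Filter.atTop Filter.atTop :=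
      Filter.Tendsto.atTop_mul_const hd Filter.tendsto_id
    have h2 := Filter.tendsto_atTop_add_const_left Filter.atTop 1 h1
    have h3 := Filter.Tendsto.const_mul_atTop hs h2
    have h4 := Real.tendsto_log_atTop.comp h3
    exact Filter.tendsto_atTop_add_const_left Filter.atTop K h4
  refine Filter.tendsto_atTop_mono' Filter.atTop ?_ hg
  filter_upwards [Filter.eventually_ge_atTop (0 : ℝ)] with γ hγ
  have hcoef : 0 ≤ 1 / (b * M) := by positivity
  have hsum : (M : ℝ) * r ≤ ∑ m, ρ (mdist S0 a (y m) γ) := by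
    calc (M : ℝ) * r = ∑ _m : Fin M, r := by
          simp [Finset.sum_const, nsmul_eq_mul]
      _ ≤ ∑ m, ρ (mdist S0 a (y m) γ) :=
          Finset.sum_le_sum fun m _ => hr _ (hmdist γ hγ m)
  have h1 : K ≤ (1 / (b * M)) * ∑ m, ρ (mdist S0 a (y m) γ) :=
    mul_le_mul_of_nonneg_left hsum hcoef
  have h2 : Real.log (s * (1 + γ * d)) = Real.log ((Sig S0 a γ).det.re) := by
    rw [hdet γ]
  rw [obj, ← h2]
  exact add_le_add_left h1 _
end
end
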